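/- Let p be a prime element of 𝒪 with p ≡ 1 (mod 3) and let w, B, b ∈ 𝒪 with bwB coprime to p. Then ∑_{A (p)*} (A/p)₃ · e(b·(wA)⁻¹/p) · ∑_{x (p)} e((A w² x³ + p B x)/p) = μ(p)·(w/p)₃·g(1,p) + (b⁻¹/p)₃·N(p), where b⁻¹ is an inverse of b modulo p and μ(p) = −1. -/

import Mathlib

/-!
Modulo `p`, `𝒪/(p)` is a finite field `F` with `N(p)` elements, on which `(·/p)₃` is a
multiplicative character `χ` of order `3` and `x ↦ e(x/p)` is a primitive additive character `ψ`.
Since `#{t : t³ = y} = 1 + χ(y) + χ²(y)`, the inner cubic sum equals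
`χ⁻¹(a) g(χ) + χ⁻¹(a)² g(χ²)` with `a = A w²`. Substituting `A = (w v)⁻¹`, the outer sum becomes
`∑_{v ≠ 0} ψ(b v) (χ(w) g(χ) + χ(v) g(χ²)) = -χ(w) g(χ) + χ(b⁻¹) g(χ) g(χ²)`, and
`g(χ) g(χ²) = χ(-1) N(p) = N(p)`. Finally `μ(p) = -1` and `g(1, p) = g(χ)`.
-/

noncomputable section

namespace CubicSeries

open scoped Classical

def ω : ℂ := Complex.exp (2 * Real.pi * Complex.I / 3)

def O : Subring ℂ := Subring.closure {ω}

abbrev OK : Type _ := O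

def δ : ℂ := ω - ω ^ 2

def eC (z : ℂ) : ℂ :=
  Complex.exp (2 * Real.pi * Complex.I * (z / δ + (starRingEnd ℂ) (z / δ)))

def rep {I : Ideal OK} (x : OK ⧸ I) : OK :=
  Function.surjInv Ideal.Quotient.mk_surjective x

/-- `N(c) = |𝒪/(c)|`, the absolute norm. -/
def Nm (c : OK) : ℕ := Nat.card (OK ⧸ Ideal.span {c})

/-- `φ(c) = |(𝒪/(c))ˣ|`. -/
def totient (c : OK) : ℕ := Nat.card ((OK ⧸ Ideal.span {c})ˣ)

/-- a multiplicative inverse modulo `c` (an arbitrary element when `x` is not invertible). -/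
def invMod (c x : OK) : OK :=
  rep (Ring.inverse (Ideal.Quotient.mk (Ideal.span {c}) x))

def T (A B c : OK) : ℂ :=
  ∑ᶠ x : OK ⧸ Ideal.span {c}, eC (((A * rep x ^ 3 + B * rep x : OK) : ℂ) / (c : ℂ))

/-- The cubic residue symbol `(x/π)₃` for a prime element `π` not dividing `3`:
the unique cube root of unity congruent to `x^{(N(π)-1)/3}` mod `π`, and `0` if `π ∣ x`. -/
def cubicCharP (π x : OK) : OK :=
  if h : ∃ ζ : OK, ζ ^ 3 = 1 ∧ π ∣ ζ - x ^ ((Nm π - 1) / 3) ∧ ¬ π ∣ x then h.choose else 0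

/-- The cubic residue symbol `(x/c)₃` for `c` coprime to `3`, defined via a factorization of
`c` into a unit times prime elements (with multiplicity). -/
def cubicChar (c x : OK) : OK :=
  if h : ∃ fs : OKˣ × Multiset OK, (∀ π ∈ fs.2, Prime π) ∧ c = (fs.1 : OK) * fs.2.prod
  then (h.choose.2.map fun π => cubicCharP π x).prod
  else 0

/-- The cubic Gauss sum `g(a,c) = ∑_{x (c)*} (x/c)₃ e(ax/c)`. -/
def gaussSum (a c : OK) : ℂ :=
  ∑ᶠ u : (OK ⧸ Ideal.span {c})ˣ,
    ((cubicChar c (rep u.val) : OK) : ℂ) * eC (((a * rep u.val : OK) : ℂ) / (c : ℂ))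

/-- The Möbius function: `μ(c) = (−1)^r` if `(c)` is a product of `r` distinct prime ideals,
and `μ(c) = 0` otherwise. -/
def moebius (c : OK) : ℤ :=
  if h : ∃ s : Finset (Ideal OK), (∀ P ∈ s, Prime P) ∧ Ideal.span {c} = ∏ P ∈ s, P
  then (-1) ^ h.choose.card
  else 0

/-- `p^n` modulo `c`, where a negative exponent means the inverse of `p^{-n}` mod `c`. -/
def ppow (c p : OK) (n : ℤ) : OK :=
  if 0 ≤ n then p ^ n.toNat else invMod c (p ^ (-n).toNat)

/-- A choice of generator of a (principal) ideal. -/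
def gen (J : Ideal OK) : OK := if h : ∃ q : OK, Ideal.span {q} = J then h.choose else 0

/-- A choice of cofactor: `cofactor c q` is a `d` with `c = q·d`, when one exists. -/
def cofactor (c q : OK) : OK := if h : ∃ d : OK, c = q * d then h.choose else 0

end CubicSeries

open Finset

namespace Ideal

variable {R : Type*} [CommRing R]

lemma span_singleton_dvd_of_le {p : R} {J : Ideal R} (h : J ≤ span {p}) : span {p} ∣ J := by
  refine ⟨J.colon {p}, (eq_span_singleton_mul _ _).mpr ⟨fun z hz => ?_, fun z hz => ?_⟩⟩
  · obtain ⟨y, rfl⟩ := mem_span_singleton'.mp (h hz)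
    exact ⟨y, Submodule.mem_colon_singleton.mpr (by rwa [smul_eq_mul]), mul_comm _ _⟩
  · simpa [mul_comm] using Submodule.mem_colon_singleton.mp hz

lemma prime_span_singleton_of_prime {p : R} (hp : Prime p) : Prime (span {p}) := by
  have hprime := (span_singleton_prime hp.ne_zero).mpr hp
  refine ⟨by simpa using hp.ne_zero, by simpa using hp.not_isUnit, fun I J hIJ => ?_⟩
  exact (hprime.mul_le.mp (le_of_dvd hIJ)).imp span_singleton_dvd_of_le span_singleton_dvd_of_le

lemma card_eq_one_of_span_singleton_eq_prod [IsDomain R] {p : R} (hp : Prime p)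
    {s : Finset (Ideal R)} (hs : ∀ P ∈ s, Prime P) (h : span {p} = ∏ P ∈ s, P) :
    #s = 1 := by
  have hprime := (span_singleton_prime hp.ne_zero).mpr hp
  obtain ⟨P, hPs, hP⟩ := hprime.prod_le.mp h.ge
  have hsplit : span {p} = P * ∏ Q ∈ s.erase P, Q := by
    rw [h]
    exact (mul_prod_erase s (fun Q => Q) hPs).symm
  have hPeq : P = span {p} := le_antisymm hP (hsplit ▸ mul_le_left)
  have htop : ∏ Q ∈ s.erase P, Q = ⊤ := by
    refine (span_singleton_mul_right_inj hp.ne_zero).mp ?_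
    rw [mul_top, ← hPeq, ← hsplit, hPeq]
  have hempty : s.erase P = ∅ := by
    refine Finset.eq_empty_of_forall_notMem fun Q hQ => (hs Q (mem_of_mem_erase hQ)).not_isUnit ?_
    rw [isUnit_iff, eq_top_iff, ← htop]
    exact le_of_dvd (dvd_prod_of_mem _ hQ)
  rw [← card_erase_add_one hPs, hempty, card_empty]

end Ideal

lemma Multiset.exists_eq_singleton_of_irreducible_eq_unit_mul_prod {M : Type*}
    [CommMonoidWithZero M] {p : M} (hp : Irreducible p) {u : Mˣ} {m : Multiset M}
    (hm : ∀ π ∈ m, Prime π) (h : p = u * m.prod) : ∃ π, m = {π} ∧ Associated π p := by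
  rcases m.empty_or_exists_mem with rfl | ⟨π, hπ⟩
  · exact absurd (h ▸ by simp) hp.not_isUnit
  obtain ⟨t, rfl⟩ := Multiset.exists_cons_of_mem hπ
  rw [Multiset.prod_cons] at h
  have ht : IsUnit t.prod := by
    refine (hp.isUnit_or_isUnit (a := u * π) (h.trans (mul_assoc _ _ _).symm)).resolve_left ?_
    exact fun hu => (hm π (mem_cons_self π t)).not_isUnit (isUnit_of_mul_isUnit_right hu)
  have ht0 : t = 0 := Multiset.eq_zero_of_forall_notMem fun a ha =>
    (hm a (mem_cons_of_mem ha)).not_isUnit (isUnit_of_dvd_unit (Multiset.dvd_prod ha) ht)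
  subst ht0
  exact ⟨π, rfl, u, by rw [h]; simp [mul_comm]⟩

namespace MulChar

variable {F R : Type*} [Field F] [CommRing R] {χ : MulChar F R}

lemma apply_pow_three_eq_one (hχ : orderOf χ = 3) {a : F} (ha : a ≠ 0) : χ a ^ 3 = 1 := by
  rw [← χ.pow_apply' three_ne_zero, ← hχ, pow_orderOf_eq_one, MulChar.one_apply ha.isUnit]

lemma apply_neg_one_eq_one_of_orderOf_eq_three (hχ : orderOf χ = 3) : χ (-1) = 1 := by
  have h3 := apply_pow_three_eq_one hχ (neg_ne_zero.mpr one_ne_zero)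
  have h2 : χ (-1) ^ 2 = 1 := by rw [← map_pow, neg_one_sq, map_one]
  linear_combination h3 - χ (-1) * h2

lemma apply_inv_eq_sq (hχ : orderOf χ = 3) {a : F} (ha : a ≠ 0) : χ a⁻¹ = χ a ^ 2 := by
  have h : χ a⁻¹ * χ a = 1 := by rw [← map_mul, inv_mul_cancel₀ ha, map_one]
  linear_combination χ a ^ 2 * h - χ a⁻¹ * apply_pow_three_eq_one hχ ha

variable [Fintype F]

lemma exists_pow_three_eq_of_apply_eq_one (hχ : orderOf χ = 3) {y : F} (hy : y ≠ 0)
    (h : χ y = 1) : ∃ t, t ^ 3 = y := by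
  obtain ⟨g, hg⟩ := IsCyclic.exists_generator (α := Fˣ)
  have hg1 : χ g ≠ 1 := fun h1 => by
    have : χ = 1 := (MulChar.eq_iff hg χ 1).mpr (by rw [h1, MulChar.one_apply_coe])
    rw [this, orderOf_one] at hχ
    omega
  have hg3 : orderOf (χ g) = 3 := orderOf_eq_prime (apply_pow_three_eq_one hχ g.ne_zero) hg1
  obtain ⟨k, hk⟩ := mem_powers_iff_mem_zpowers.mpr (hg (Units.mk0 y hy))
  have hyk : (g : F) ^ k = y := by
    rw [← Units.val_pow_eq_pow_val, show g ^ k = Units.mk0 y hy from hk, Units.val_mk0]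
  have h3k : 3 ∣ k := by
    rw [← hg3]
    exact orderOf_dvd_of_pow_eq_one (by rw [← map_pow, hyk, h])
  exact ⟨(g : F) ^ (k / 3), by rw [← pow_mul, Nat.div_mul_cancel h3k, hyk]⟩

lemma exists_isPrimitiveRoot_three (hχ : orderOf χ = 3) : ∃ ζ : F, IsPrimitiveRoot ζ 3 := by
  classical
  have h3 : 3 ∣ Fintype.card Fˣ := by
    rw [Fintype.card_units, ← hχ]
    exact χ.orderOf_dvd_card_sub_one
  obtain ⟨ζ, hζ⟩ := exists_prime_orderOf_dvd_card 3 h3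
  refine ⟨ζ, IsPrimitiveRoot.coe_units_iff.mpr ?_⟩
  rw [← hζ]
  exact IsPrimitiveRoot.orderOf ζ

lemma card_cube_roots_eq [IsDomain R] [DecidableEq F] (hχ : orderOf χ = 3) (y : F) :
    (#{t | t ^ 3 = y} : R) = 1 + χ y + χ y ^ 2 := by
  rcases eq_or_ne y 0 with rfl | hy
  · simp [Finset.filter_eq']
  obtain ⟨ζ, hζ⟩ := exists_isPrimitiveRoot_three hχ
  have hcard := hζ.card_nthRoots y
  rw [← Multiset.toFinset_card_of_nodup (hζ.nthRoots_nodup hy)] at hcard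
  have hfilter : ({t | t ^ 3 = y} : Finset F) = (Polynomial.nthRoots 3 y).toFinset := by
    ext t; simp [Polynomial.mem_nthRoots]
  rw [hfilter, hcard]
  split_ifs with hcube
  · obtain ⟨α, rfl⟩ := hcube
    have hα : α ≠ 0 := by rintro rfl; simp at hy
    rw [map_pow, apply_pow_three_eq_one hχ hα]
    norm_num
  · have hne : χ y ≠ 1 := fun h => hcube (exists_pow_three_eq_of_apply_eq_one hχ hy h)
    have h3 := apply_pow_three_eq_one hχ hy
    have : (χ y - 1) * (1 + χ y + χ y ^ 2) = 0 := by linear_combination h3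
    rw [Nat.cast_zero, (mul_eq_zero.mp this).resolve_left (sub_ne_zero.mpr hne)]

end MulChar

section CharacterSums

variable {F R : Type*} [Field F] [Fintype F] [CommRing R]

lemma sum_units_eq_sum_sub_zero [DecidableEq F] {M : Type*} [AddCommGroup M] (f : F → M) :
    ∑ u : Fˣ, f u = ∑ y, f y - f 0 := by
  rw [← Finset.sum_erase_eq_sub (mem_univ 0)]
  refine Finset.sum_bij (fun u _ => (u : F)) (fun u _ => by simp) (fun _ _ _ _ => Units.ext)
    (fun y hy => ⟨Units.mk0 y (Finset.ne_of_mem_erase hy), mem_univ _, rfl⟩) (fun _ _ => rfl)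

lemma sum_mulChar_mul_addChar_mul (χ : MulChar F R) (ψ : AddChar F R) {a : F} (ha : a ≠ 0) :
    ∑ y, χ y * ψ (a * y) = χ⁻¹ a * gaussSum χ ψ := by
  have h := gaussSum_mulShift_eq χ ψ (Units.mk0 a ha)
  rw [Units.val_mk0] at h
  rw [← h]
  rfl

variable [IsDomain R] {χ : MulChar F R} {ψ : AddChar F R}

lemma sum_addChar_mul_eq_zero (hψ : ψ.IsPrimitive) {a : F} (ha : a ≠ 0) :
    ∑ y, ψ (a * y) = 0 := by
  classical
  simp_rw [mul_comm a]
  rw [AddChar.sum_mulShift a hψ, if_neg ha, Nat.cast_zero]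

lemma sum_addChar_mul_cube (hχ : orderOf χ = 3) (hψ : ψ.IsPrimitive) {a : F} (ha : a ≠ 0) :
    ∑ t, ψ (a * t ^ 3) = χ⁻¹ a * gaussSum χ ψ + χ⁻¹ a ^ 2 * gaussSum (χ ^ 2) ψ := by
  classical
  have hfiber : ∑ t, ψ (a * t ^ 3) = ∑ y, (#{t | t ^ 3 = y} : R) * ψ (a * y) := by
    rw [← Finset.sum_fiberwise univ (fun t : F => t ^ 3)]
    refine Finset.sum_congr rfl fun y _ => ?_
    rw [Finset.sum_congr rfl fun t ht => by rw [(Finset.mem_filter.mp ht).2], Finset.sum_const,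
      nsmul_eq_mul]
  simp_rw [hfiber, MulChar.card_cube_roots_eq hχ, add_mul, Finset.sum_add_distrib, one_mul]
  rw [show ∑ y, χ y ^ 2 * ψ (a * y) = ∑ y, (χ ^ 2) y * ψ (a * y) by
      simp_rw [MulChar.pow_apply' χ two_ne_zero],
    sum_mulChar_mul_addChar_mul _ _ ha, sum_mulChar_mul_addChar_mul _ _ ha,
    sum_addChar_mul_eq_zero hψ ha, ← inv_pow, MulChar.pow_apply' _ two_ne_zero, zero_add]

lemma gaussSum_mul_gaussSum_sq (hχ : orderOf χ = 3) (hψ : ψ.IsPrimitive) :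
    gaussSum χ ψ * gaussSum (χ ^ 2) ψ = Fintype.card F := by
  have h := gaussSum_mul_gaussSum_pow_orderOf_sub_one (χ := χ) (fun h => by simp [h] at hχ) hψ
  rwa [hχ, MulChar.apply_neg_one_eq_one_of_orderOf_eq_three hχ, one_mul] at h

lemma mulChar_inv_mul_sum_cube (hχ : orderOf χ = 3) (hψ : ψ.IsPrimitive) {w v : F}
    (hw : w ≠ 0) (hv : v ≠ 0) :
    χ (w * v)⁻¹ * ∑ t, ψ ((w * v)⁻¹ * w ^ 2 * t ^ 3) =
      χ w * gaussSum χ ψ + χ v * gaussSum (χ ^ 2) ψ := by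
  have hc := MulChar.apply_pow_three_eq_one hχ hw
  have hd := MulChar.apply_pow_three_eq_one hχ hv
  rw [show (w * v)⁻¹ * w ^ 2 = w * v⁻¹ by field_simp,
    sum_addChar_mul_cube hχ hψ (mul_ne_zero hw (inv_ne_zero hv)), MulChar.inv_apply']
  simp only [mul_inv, inv_inv, map_mul, MulChar.apply_inv_eq_sq hχ hw,
    MulChar.apply_inv_eq_sq hχ hv]
  linear_combination (χ w * χ v ^ 3 * gaussSum χ ψ +
    χ v ^ 4 * (χ w ^ 3 + 1) * gaussSum (χ ^ 2) ψ) * hc +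
    (χ w * gaussSum χ ψ + χ v * gaussSum (χ ^ 2) ψ) * hd

theorem sum_units_mulChar_mul_sum_cube [DecidableEq F] (hχ : orderOf χ = 3)
    (hψ : ψ.IsPrimitive) {β w : F} (hβ : β ≠ 0) (hw : w ≠ 0) :
    ∑ u : Fˣ, χ u * ψ (β * (w * u)⁻¹) * ∑ t, ψ (u * w ^ 2 * t ^ 3) =
      -(χ w * gaussSum χ ψ) + χ β⁻¹ * Fintype.card F := by
  set c := χ w * gaussSum χ ψ
  set G₂ := gaussSum (χ ^ 2) ψ
  -- the substitution `u = (w v)⁻¹`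
  let e : Fˣ ≃ Fˣ := (Equiv.mulLeft (Units.mk0 w hw)).trans (Equiv.inv Fˣ)
  have hsubst (v : Fˣ) : χ (e v) * ψ (β * (w * e v)⁻¹) * ∑ t, ψ (e v * w ^ 2 * t ^ 3) =
      c * ψ (β * v) + G₂ * (χ v * ψ (β * v)) := by
    have h := mulChar_inv_mul_sum_cube hχ hψ hw v.ne_zero
    simp only [e, Equiv.trans_apply, Equiv.coe_mulLeft, Equiv.inv_apply, Units.val_inv_eq_inv_val,
      Units.val_mul, Units.val_mk0, mul_inv, inv_inv, mul_inv_cancel_left₀ hw] at h ⊢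
    linear_combination ψ (β * v) * h
  rw [← e.sum_comp, Finset.sum_congr rfl fun v _ => hsubst v,
    sum_units_eq_sum_sub_zero fun y => c * ψ (β * y) + G₂ * (χ y * ψ (β * y)),
    Finset.sum_add_distrib, ← Finset.mul_sum, ← Finset.mul_sum, sum_addChar_mul_eq_zero hψ hβ,
    sum_mulChar_mul_addChar_mul χ ψ hβ, MulChar.inv_apply']
  simp only [mul_zero, AddChar.map_zero_eq_one, MulChar.map_zero]
  linear_combination χ β⁻¹ * gaussSum_mul_gaussSum_sq hχ hψ

end CharacterSums

namespace CubicSeries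

open scoped Classical

lemma isPrimitiveRoot_omega : IsPrimitiveRoot ω 3 := by
  simpa [ω] using Complex.isPrimitiveRoot_exp 3 three_ne_zero

lemma omega_pow_three : ω ^ 3 = 1 := isPrimitiveRoot_omega.pow_eq_one

lemma one_add_omega_add_omega_sq : 1 + ω + ω ^ 2 = 0 := by
  simpa [Finset.sum_range_succ] using isPrimitiveRoot_omega.geom_sum_eq_zero (by norm_num)

lemma conj_omega : starRingEnd ℂ ω = ω ^ 2 := by
  rw [← Complex.inv_eq_conj (Complex.norm_eq_one_of_pow_eq_one omega_pow_three three_ne_zero)]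
  exact inv_eq_of_mul_eq_one_left (by rw [← pow_succ, omega_pow_three])

lemma conj_delta : starRingEnd ℂ δ = -δ := by
  simp only [δ, map_sub, map_pow, conj_omega]
  linear_combination (-ω) * omega_pow_three

lemma delta_ne_zero : δ ≠ 0 := by
  intro h
  have : ω * (1 - ω) = 0 := by rw [← h, δ]; ring
  rcases mul_eq_zero.mp this with h0 | h1
  · exact isPrimitiveRoot_omega.ne_zero three_ne_zero h0
  · exact isPrimitiveRoot_omega.ne_one (by norm_num) (sub_eq_zero.mp h1).symm

lemma omega_mem : ω ∈ O := Subring.subset_closure rfl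

def ωO : OK := ⟨ω, omega_mem⟩

lemma mem_O_iff {z : ℂ} : z ∈ O ↔ ∃ a b : ℤ, z = a + b * ω := by
  constructor
  · intro hz
    induction hz using Subring.closure_induction with
    | mem x hx => exact ⟨0, 1, by rw [Set.mem_singleton_iff.mp hx]; push_cast; ring⟩
    | zero => exact ⟨0, 0, by push_cast; ring⟩
    | one => exact ⟨1, 0, by push_cast; ring⟩
    | add x y _ _ ihx ihy =>
      obtain ⟨a, b, rfl⟩ := ihx
      obtain ⟨c, d, rfl⟩ := ihy
      exact ⟨a + c, b + d, by push_cast; ring⟩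
    | neg x _ ihx =>
      obtain ⟨a, b, rfl⟩ := ihx
      exact ⟨-a, -b, by push_cast; ring⟩
    | mul x y _ _ ihx ihy =>
      obtain ⟨a, b, rfl⟩ := ihx
      obtain ⟨c, d, rfl⟩ := ihy
      refine ⟨a * c - b * d, a * d + b * c - b * d, ?_⟩
      push_cast
      linear_combination (b * d : ℂ) * one_add_omega_add_omega_sq
  · rintro ⟨a, b, rfl⟩
    exact add_mem (intCast_mem O a) (mul_mem (intCast_mem O b) omega_mem)

instance : Module.Finite ℤ OK := by
  refine ⟨⟨{1, ωO}, eq_top_iff.mpr fun x _ => ?_⟩⟩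
  obtain ⟨a, b, h⟩ := mem_O_iff.mp x.2
  have hx : x = a • 1 + b • ωO := Subtype.ext (by simp [h, ωO])
  rw [hx]
  exact add_mem (Submodule.smul_mem _ _ (Submodule.subset_span (by simp)))
    (Submodule.smul_mem _ _ (Submodule.subset_span (by simp)))

lemma finite_quotient {p : OK} (hp : p ≠ 0) : Finite (OK ⧸ Ideal.span {p}) :=
  Ideal.finiteQuotientOfFreeOfNeBot _ (by simpa using hp)

lemma eC_add (z w : ℂ) : eC (z + w) = eC z * eC w := by
  simp only [eC, add_div, map_add, ← Complex.exp_add]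
  ring_nf

lemma eC_add_mul_omega_div (c d n : ℤ) :
    eC ((c + d * ω) / n) = Complex.exp (2 * Real.pi * Complex.I * (d / n)) := by
  have h : (c + d * ω) / δ + starRingEnd ℂ ((c + d * ω) / δ) = d := by
    rw [map_div₀, conj_delta, map_add, map_mul, conj_omega, map_intCast, map_intCast, div_neg,
      ← sub_eq_add_neg, ← sub_div, div_eq_iff delta_ne_zero, δ]
    ring
  rw [eC, div_right_comm, map_div₀, map_intCast, ← add_div, h]

lemma eC_coe (x : OK) : eC x = 1 := by
  obtain ⟨c, d, h⟩ := mem_O_iff.mp x.2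
  rw [h, ← div_one ((c : ℂ) + d * ω), ← Int.cast_one, eC_add_mul_omega_div, Int.cast_one,
    div_one, mul_comm, Complex.exp_int_mul_two_pi_mul_I]

lemma eC_div_congr {p a b : OK} (h : p ∣ a - b) : eC (a / p) = eC (b / p) := by
  obtain ⟨c, hc⟩ := h
  rcases eq_or_ne (p : ℂ) 0 with hp | hp
  · simp [hp]
  have hC : (a : ℂ) = b + p * c := by
    rw [← Subring.coe_mul, ← Subring.coe_add, ← hc, add_sub_cancel]
  have : (a : ℂ) / p = b / p + c := by
    rw [hC]
    field_simp
  rw [this, eC_add, eC_coe, mul_one]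

lemma dvd_of_eC_add_mul_omega_div_eq_one {c d n : ℤ} (hn : n ≠ 0)
    (h : eC ((c + d * ω) / n) = 1) : n ∣ d := by
  rw [eC_add_mul_omega_div, Complex.exp_eq_one_iff] at h
  obtain ⟨k, hk⟩ := h
  have : (d : ℂ) = n * k := by
    field_simp at hk
    exact hk
  exact ⟨k, by exact_mod_cast this⟩

lemma eq_zero_of_sq_sub_mul_add_sq_eq_zero {a b : ℤ} (h : a ^ 2 - a * b + b ^ 2 = 0) :
    a = 0 ∧ b = 0 := by
  have hb : b ^ 2 = 0 := by nlinarith [sq_nonneg (2 * a - b), sq_nonneg b]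
  have ha : a ^ 2 = 0 := by nlinarith [sq_nonneg (2 * a - b), sq_nonneg b]
  exact ⟨pow_eq_zero_iff two_ne_zero |>.mp ha, pow_eq_zero_iff two_ne_zero |>.mp hb⟩

lemma isUnit_of_dvd_of_sq_sub_mul_add_sq_eq {a b n : ℤ} (hn : n ≠ 0)
    (h : a ^ 2 - a * b + b ^ 2 = n) (ha : n ∣ a) (hb : n ∣ b) : IsUnit n := by
  obtain ⟨a', rfl⟩ := ha
  obtain ⟨b', rfl⟩ := hb
  exact IsUnit.of_mul_eq_one (a' ^ 2 - a' * b' + b' ^ 2)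
    (mul_left_cancel₀ hn (by linear_combination h))

lemma exists_eC_div_ne_one {p : OK} (hp0 : p ≠ 0) (hp : ¬IsUnit p) :
    ∃ x : OK, eC (x / p) ≠ 1 := by
  by_contra! h
  obtain ⟨a, b, hab⟩ := mem_O_iff.mp p.2
  obtain ⟨n, hn_def⟩ : ∃ n : ℤ, a ^ 2 - a * b + b ^ 2 = n := ⟨_, rfl⟩
  have hn : n ≠ 0 := by
    rintro rfl
    obtain ⟨rfl, rfl⟩ := eq_zero_of_sq_sub_mul_add_sq_eq_zero hn_def
    exact hp0 (Subtype.ext (by simp [hab]))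
  -- `q` is the complex conjugate of `p`, so that `p * q` is the norm `n`
  set q : OK := ((a - b : ℤ) : OK) - (b : OK) * ωO
  have hpq : p * q = n := by
    apply Subtype.ext
    simp only [q, ωO]
    push_cast [hab, ← hn_def]
    linear_combination (-(b : ℂ) ^ 2) * one_add_omega_add_omega_sq
  have hpqC : (p : ℂ) * q = n := by exact_mod_cast congrArg Subtype.val hpq
  have hq : (q : ℂ) ≠ 0 := right_ne_zero_of_mul (hpqC ▸ Int.cast_ne_zero.mpr hn)
  have hdvd (x : OK) (c d : ℤ) (hx : (x : ℂ) * q = c + d * ω) : n ∣ d := by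
    refine dvd_of_eC_add_mul_omega_div_eq_one (c := c) hn ?_
    rw [← hx, ← hpqC, mul_div_mul_right _ _ hq]
    exact h x
  have hna : n ∣ a := hdvd ωO b a (by
    simp only [q, ωO]
    push_cast
    linear_combination (-(b : ℂ)) * one_add_omega_add_omega_sq)
  have hnb : n ∣ b := dvd_neg.mp (hdvd 1 (a - b) (-b) (by simp [q, ωO]; ring))
  have hn1 := (isUnit_of_dvd_of_sq_sub_mul_add_sq_eq hn hn_def hna hnb).map (Int.castRingHom OK)
  exact hp (isUnit_of_mul_isUnit_left (hpq ▸ hn1 : IsUnit (p * q)))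

lemma omegaO_pow_three : ωO ^ 3 = 1 := Subtype.ext omega_pow_three

lemma omegaO_ne_one : ωO ≠ 1 :=
  fun h => isPrimitiveRoot_omega.ne_one (by norm_num) (congrArg Subtype.val h)

lemma pow_three_sub_one_eq (y : OK) : y ^ 3 - 1 = (y - 1) * (y - ωO) * (y - ωO ^ 2) := by
  apply Subtype.ext
  push_cast [ωO]
  linear_combination
    ((y : ℂ) ^ 2 - y) * one_add_omega_add_omega_sq + (1 - (y : ℂ)) * omega_pow_three

lemma exists_pow_three_eq_one_dvd_sub {p y : OK} (hp : Prime p) (hy : p ∣ y ^ 3 - 1) :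
    ∃ ζ : OK, ζ ^ 3 = 1 ∧ p ∣ ζ - y := by
  have hneg {ζ : OK} (h : p ∣ y - ζ) : p ∣ ζ - y := by rwa [← dvd_neg, neg_sub]
  rw [pow_three_sub_one_eq] at hy
  rcases hp.dvd_or_dvd hy with h | h
  · rcases hp.dvd_or_dvd h with h | h
    · exact ⟨1, one_pow 3, hneg h⟩
    · exact ⟨ωO, omegaO_pow_three, hneg h⟩
  · exact ⟨ωO ^ 2, by rw [← pow_mul, mul_comm, pow_mul, omegaO_pow_three, one_pow], hneg h⟩

-- distinct cube roots of unity satisfy `(ζ - ζ')² = -3ζζ'`, so their difference divides `3`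
lemma eq_of_pow_three_eq_one_of_dvd_sub {p ζ ζ' : OK} (h3 : ¬p ∣ 3) (hζ : ζ ^ 3 = 1)
    (hζ' : ζ' ^ 3 = 1) (h : p ∣ ζ - ζ') : ζ = ζ' := by
  by_contra hne
  have hS : ζ ^ 2 + ζ * ζ' + ζ' ^ 2 = 0 := by
    have : (ζ - ζ') * (ζ ^ 2 + ζ * ζ' + ζ' ^ 2) = 0 := by linear_combination hζ - hζ'
    exact (mul_eq_zero.mp this).resolve_left (sub_ne_zero.mpr hne)
  have h3eq : (3 : OK) = (ζ - ζ') ^ 2 * -(ζ * ζ') ^ 2 := by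
    linear_combination (-3 * ζ' ^ 3) * hζ - 3 * hζ' + (ζ * ζ') ^ 2 * hS
  exact h3 (h3eq ▸ (dvd_pow h two_ne_zero).mul_right _)

lemma mk_rep {I : Ideal OK} (z : OK ⧸ I) : Ideal.Quotient.mk I (rep z) = z :=
  Function.surjInv_eq Ideal.Quotient.mk_surjective z

lemma dvd_rep_mk_sub (p x : OK) : p ∣ rep (Ideal.Quotient.mk (Ideal.span {p}) x) - x := by
  rw [← Ideal.Quotient.eq_zero_iff_dvd, map_sub, mk_rep, sub_self]

lemma mk_invMod (c x : OK) :
    Ideal.Quotient.mk (Ideal.span {c}) (invMod c x) = Ring.inverse (Ideal.Quotient.mk _ x) :=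
  mk_rep _

lemma cubicCharP_of_dvd {p x : OK} (hx : p ∣ x) : cubicCharP p x = 0 := by
  rw [cubicCharP, dif_neg]
  rintro ⟨_, _, _, h⟩
  exact h hx

section ResidueField

variable {p : OK} [Fact (Prime p)]

instance : Finite (OK ⧸ Ideal.span {p}) := finite_quotient (Fact.out : Prime p).ne_zero

instance : (Ideal.span {p}).IsPrime :=
  (Ideal.span_singleton_prime (Fact.out : Prime p).ne_zero).mpr Fact.out

instance : (Ideal.span {p}).IsMaximal :=
  Ideal.Quotient.maximal_of_isField _ (Finite.isField_of_domain _)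

noncomputable instance : Field (OK ⧸ Ideal.span {p}) := Ideal.Quotient.field _

noncomputable instance : Fintype (OK ⧸ Ideal.span {p}) := Fintype.ofFinite _

lemma card_quotient : Fintype.card (OK ⧸ Ideal.span {p}) = Nm p := Nat.card_eq_fintype_card.symm

lemma dvd_pow_Nm_sub_one_sub_one {x : OK} (hx : ¬p ∣ x) : p ∣ x ^ (Nm p - 1) - 1 := by
  rw [← Ideal.Quotient.eq_zero_iff_dvd, map_sub, map_pow, ← card_quotient,
    FiniteField.pow_card_sub_one_eq_one _ (mt (Ideal.Quotient.eq_zero_iff_dvd p x).mp hx),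
    map_one, sub_self]

lemma three_dvd_Nm_sub_one (h3 : ¬p ∣ 3) : 3 ∣ Nm p - 1 := by
  set z := Ideal.Quotient.mk (Ideal.span {p}) ωO
  have hz3 : z ^ 3 = 1 := by rw [← map_pow, omegaO_pow_three, map_one]
  have hz1 : z ≠ 1 := fun h => omegaO_ne_one (eq_of_pow_three_eq_one_of_dvd_sub h3
    omegaO_pow_three (one_pow 3) ((Ideal.Quotient.eq_zero_iff_dvd _ _).mp (by simp [z, h])))
  have hz0 : z ≠ 0 := by rintro h; simp [h] at hz3
  rw [← orderOf_eq_prime hz3 hz1, ← card_quotient]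
  exact orderOf_dvd_of_pow_eq_one (FiniteField.pow_card_sub_one_eq_one z hz0)

lemma cubicCharP_spec (h3 : ¬p ∣ 3) {x : OK} (hx : ¬p ∣ x) :
    cubicCharP p x ^ 3 = 1 ∧ p ∣ cubicCharP p x - x ^ ((Nm p - 1) / 3) := by
  have hy : p ∣ (x ^ ((Nm p - 1) / 3)) ^ 3 - 1 := by
    rw [← pow_mul, Nat.div_mul_cancel (three_dvd_Nm_sub_one h3)]
    exact dvd_pow_Nm_sub_one_sub_one hx
  obtain ⟨ζ, hζ, hζy⟩ := exists_pow_three_eq_one_dvd_sub Fact.out hy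
  have hex : ∃ ζ : OK, ζ ^ 3 = 1 ∧ p ∣ ζ - x ^ ((Nm p - 1) / 3) ∧ ¬p ∣ x :=
    ⟨ζ, hζ, hζy, hx⟩
  rw [cubicCharP, dif_pos hex]
  exact ⟨hex.choose_spec.1, hex.choose_spec.2.1⟩

lemma cubicCharP_eq (h3 : ¬p ∣ 3) {x ζ : OK} (hx : ¬p ∣ x) (hζ : ζ ^ 3 = 1)
    (h : p ∣ ζ - x ^ ((Nm p - 1) / 3)) : cubicCharP p x = ζ := by
  obtain ⟨hc, hcx⟩ := cubicCharP_spec h3 hx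
  have hdiff := dvd_sub hcx h
  rw [sub_sub_sub_cancel_right] at hdiff
  exact eq_of_pow_three_eq_one_of_dvd_sub h3 hc hζ hdiff

lemma cubicCharP_congr (h3 : ¬p ∣ 3) {x x' : OK} (h : p ∣ x - x') :
    cubicCharP p x = cubicCharP p x' := by
  by_cases hx : p ∣ x
  · rw [cubicCharP_of_dvd hx, cubicCharP_of_dvd ((dvd_sub_right hx).mp h)]
  have hx' : ¬p ∣ x' := fun hx' => hx ((dvd_sub_left hx').mp h)
  obtain ⟨hc, hcx⟩ := cubicCharP_spec h3 hx'
  have hdiff := dvd_sub hcx (h.trans (sub_dvd_pow_sub_pow x x' ((Nm p - 1) / 3)))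
  rw [sub_sub_sub_cancel_right] at hdiff
  exact cubicCharP_eq h3 hx hc hdiff

lemma cubicCharP_mul (h3 : ¬p ∣ 3) (x y : OK) :
    cubicCharP p (x * y) = cubicCharP p x * cubicCharP p y := by
  by_cases hx : p ∣ x
  · rw [cubicCharP_of_dvd (hx.mul_right y), cubicCharP_of_dvd hx, zero_mul]
  by_cases hy : p ∣ y
  · rw [cubicCharP_of_dvd (hy.mul_left x), cubicCharP_of_dvd hy, mul_zero]
  obtain ⟨hx3, hxd⟩ := cubicCharP_spec h3 hx
  obtain ⟨hy3, hyd⟩ := cubicCharP_spec h3 hy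
  refine cubicCharP_eq h3 (Prime.not_dvd_mul Fact.out hx hy) (by rw [mul_pow, hx3, hy3, mul_one]) ?_
  have : cubicCharP p x * cubicCharP p y - (x * y) ^ ((Nm p - 1) / 3) =
      (cubicCharP p x - x ^ ((Nm p - 1) / 3)) * cubicCharP p y +
        x ^ ((Nm p - 1) / 3) * (cubicCharP p y - y ^ ((Nm p - 1) / 3)) := by ring
  rw [this]
  exact dvd_add (hxd.mul_right _) (hyd.mul_left _)

lemma cubicCharP_one (h3 : ¬p ∣ 3) : cubicCharP p 1 = 1 :=
  cubicCharP_eq h3 (Prime.not_dvd_one Fact.out) (one_pow 3) (by simp)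

end ResidueField

section Characters

variable {p : OK}

lemma cubicCharP_rep_mk [Fact (Prime p)] (h3 : ¬p ∣ 3) (x : OK) :
    cubicCharP p (rep (Ideal.Quotient.mk (Ideal.span {p}) x)) = cubicCharP p x :=
  cubicCharP_congr h3 (dvd_rep_mk_sub p x)

variable (p) in
def cubicResidueChar [Fact (Prime p)] (h3 : ¬p ∣ 3) : MulChar (OK ⧸ Ideal.span {p}) ℂ where
  toFun z := cubicCharP p (rep z)
  map_one' := by
    rw [← map_one (Ideal.Quotient.mk _), cubicCharP_rep_mk h3, cubicCharP_one h3,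
      OneMemClass.coe_one]
  map_mul' z w := by
    obtain ⟨x, rfl⟩ := Ideal.Quotient.mk_surjective z
    obtain ⟨y, rfl⟩ := Ideal.Quotient.mk_surjective w
    simp only [← map_mul, cubicCharP_rep_mk h3, cubicCharP_mul h3, Subring.coe_mul]
  map_nonunit' z hz := by
    obtain rfl : z = 0 := not_not.mp (mt isUnit_iff_ne_zero.mpr hz)
    rw [← map_zero (Ideal.Quotient.mk _), cubicCharP_rep_mk h3,
      cubicCharP_of_dvd (dvd_zero p), ZeroMemClass.coe_zero]

lemma cubicResidueChar_apply [Fact (Prime p)] (h3 : ¬p ∣ 3) (z : OK ⧸ Ideal.span {p}) :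
    cubicResidueChar p h3 z = cubicCharP p (rep z) :=
  rfl

lemma cubicResidueChar_mk [Fact (Prime p)] (h3 : ¬p ∣ 3) (x : OK) :
    cubicResidueChar p h3 (Ideal.Quotient.mk _ x) = cubicCharP p x := by
  rw [cubicResidueChar_apply, cubicCharP_rep_mk h3]

variable (p) in
def eChar : AddChar (OK ⧸ Ideal.span {p}) ℂ where
  toFun z := eC (rep z / p)
  map_zero_eq_one' := by
    rw [← map_zero (Ideal.Quotient.mk _), eC_div_congr (dvd_rep_mk_sub p 0),
      ZeroMemClass.coe_zero, zero_div]
    simpa using eC_coe 0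
  map_add_eq_mul' z w := by
    obtain ⟨x, rfl⟩ := Ideal.Quotient.mk_surjective z
    obtain ⟨y, rfl⟩ := Ideal.Quotient.mk_surjective w
    simp only [← map_add, eC_div_congr (dvd_rep_mk_sub p _), ← eC_add, ← add_div,
      Subring.coe_add]

lemma eChar_mk (x : OK) : eChar p (Ideal.Quotient.mk _ x) = eC (x / p) :=
  eC_div_congr (dvd_rep_mk_sub p x)

lemma orderOf_cubicResidueChar [Fact (Prime p)] (h3 : ¬p ∣ 3) :
    orderOf (cubicResidueChar p h3) = 3 := by
  have hrep (u : (OK ⧸ Ideal.span {p})ˣ) : ¬p ∣ rep (u : OK ⧸ Ideal.span {p}) := by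
    rw [← Ideal.Quotient.eq_zero_iff_dvd, mk_rep]
    exact u.ne_zero
  have hcube : cubicResidueChar p h3 ^ 3 = 1 := MulChar.ext fun u => by
    rw [MulChar.pow_apply_coe, MulChar.one_apply_coe, cubicResidueChar_apply]
    exact_mod_cast (cubicCharP_spec h3 (hrep u)).1
  refine orderOf_eq_prime hcube fun h1 => ?_
  obtain ⟨g, hg⟩ := IsCyclic.exists_generator (α := (OK ⧸ Ideal.span {p})ˣ)
  have hg1 : cubicCharP p (rep (g : OK ⧸ Ideal.span {p})) = 1 := by
    have h := congrArg (· (g : OK ⧸ Ideal.span {p})) h1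
    simp only [cubicResidueChar_apply, MulChar.one_apply_coe] at h
    exact_mod_cast h
  have hgk : g ^ ((Nm p - 1) / 3) = 1 := by
    have h := (cubicCharP_spec h3 (hrep g)).2
    rw [hg1, ← Ideal.Quotient.eq_zero_iff_dvd, map_sub, map_one, map_pow, mk_rep, sub_eq_zero]
      at h
    exact Units.ext (by simpa using h.symm)
  have hord : orderOf g = Nm p - 1 := by
    rw [orderOf_eq_card_of_forall_mem_zpowers hg, Nat.card_eq_fintype_card, Fintype.card_units,
      card_quotient]
  have hq : 1 < Nm p := card_quotient (p := p) ▸ Fintype.one_lt_card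
  obtain ⟨k, hk⟩ := three_dvd_Nm_sub_one h3
  have := Nat.le_of_dvd (by omega) (hord ▸ orderOf_dvd_of_pow_eq_one hgk)
  omega

lemma eChar_isPrimitive [hp : Fact (Prime p)] : (eChar p).IsPrimitive := by
  refine AddChar.IsPrimitive.of_ne_one fun h1 => ?_
  obtain ⟨x, hx⟩ := exists_eC_div_ne_one hp.out.ne_zero hp.out.not_isUnit
  exact hx (by rw [← eChar_mk, h1, AddChar.one_apply])

lemma cubicCharP_of_associated {π p x : OK} (h : Associated π p) :
    cubicCharP π x = cubicCharP p x := by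
  have hNm : Nm π = Nm p := by rw [Nm, Nm, Ideal.span_singleton_eq_span_singleton.mpr h]
  simp only [cubicCharP, hNm, h.dvd_iff_dvd_left]

lemma cubicChar_of_prime (hp : Prime p) (x : OK) : cubicChar p x = cubicCharP p x := by
  have hex : ∃ fs : OKˣ × Multiset OK, (∀ π ∈ fs.2, Prime π) ∧ p = fs.1 * fs.2.prod :=
    ⟨(1, {p}), by simpa using hp, by simp⟩
  rw [cubicChar, dif_pos hex]
  obtain ⟨π, hm, hπp⟩ := Multiset.exists_eq_singleton_of_irreducible_eq_unit_mul_prod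
    hp.irreducible hex.choose_spec.1 hex.choose_spec.2
  rw [hm, Multiset.map_singleton, Multiset.prod_singleton, cubicCharP_of_associated hπp]

lemma gaussSum_one_eq [hp : Fact (Prime p)] (h3 : ¬p ∣ 3) :
    gaussSum 1 p = _root_.gaussSum (cubicResidueChar p h3) (eChar p) := by
  have hsum := sum_units_eq_sum_sub_zero fun a => cubicResidueChar p h3 a * eChar p a
  rw [MulChar.map_zero, zero_mul, sub_zero] at hsum
  rw [gaussSum, finsum_eq_sum_of_fintype, _root_.gaussSum, ← hsum]
  refine Finset.sum_congr rfl fun u _ => ?_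
  rw [cubicChar_of_prime hp.out, one_mul]
  rfl

lemma moebius_of_prime (hp : Prime p) : moebius p = -1 := by
  have hex : ∃ s : Finset (Ideal OK), (∀ P ∈ s, Prime P) ∧
      Ideal.span {p} = ∏ P ∈ s, P :=
    ⟨{Ideal.span {p}}, by simpa using Ideal.prime_span_singleton_of_prime hp, by simp⟩
  rw [moebius, dif_pos hex, Ideal.card_eq_one_of_span_singleton_eq_prod hp hex.choose_spec.1
    hex.choose_spec.2, pow_one]

end Characters

theorem stmt6 (p w B b : OK) (hp : Prime p) (hp3 : (3 : OK) ∣ p - 1)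
    (hco : IsCoprime (b * w * B) p) :
    ∑ᶠ u : (OK ⧸ Ideal.span {p})ˣ,
      ((cubicCharP p (rep u.val) : OK) : ℂ) *
        eC (((b * invMod p (w * rep u.val) : OK) : ℂ) / (p : ℂ)) *
        ∑ᶠ t : OK ⧸ Ideal.span {p},
          eC (((rep u.val * w ^ 2 * rep t ^ 3 + p * B * rep t : OK) : ℂ) / (p : ℂ)) =
      (moebius p : ℂ) * ((cubicCharP p w : OK) : ℂ) * gaussSum 1 p +
        ((cubicCharP p (invMod p b) : OK) : ℂ) * (Nm p : ℂ) := by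
  have : Fact (Prime p) := ⟨hp⟩
  have h3 : ¬p ∣ 3 := fun h =>
    hp.not_isUnit (isUnit_of_dvd_one (by simpa using dvd_sub (dvd_refl p) (h.trans hp3)))
  have hκ {x : OK} (hx : x ∣ b * w * B) : Ideal.Quotient.mk (Ideal.span {p}) x ≠ 0 := fun h =>
    hp.not_isUnit (hco.isUnit_of_dvd' ((Ideal.Quotient.eq_zero_iff_dvd p x).mp h |>.trans hx)
      dvd_rfl)
  simp only [finsum_eq_sum_of_fintype, ← eChar_mk, ← cubicResidueChar_apply h3, map_add,
    map_mul, map_pow, mk_rep, mk_invMod, Ring.inverse_eq_inv', Ideal.Quotient.mk_singleton_self,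
    zero_mul, add_zero]
  rw [sum_units_mulChar_mul_sum_cube (orderOf_cubicResidueChar h3) eChar_isPrimitive
      (hκ (dvd_mul_of_dvd_left (dvd_mul_right b w) B))
      (hκ (dvd_mul_of_dvd_left (dvd_mul_left w b) B)),
    moebius_of_prime hp, gaussSum_one_eq h3, card_quotient, ← cubicResidueChar_mk h3,
    ← cubicResidueChar_mk h3, mk_invMod, Ring.inverse_eq_inv']
  push_cast
  ring

end CubicSeries
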